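/- (Corollary 3.5, avoidance of the base point.) Assume the hypotheses of Theorem 2.3 (x₀ a nondegenerate limit cycle with least period T, x_ε T-periodic solutions converging uniformly to x₀, Δ_ε the shifts from Corollary 2.2). If there exists a not-T-periodic Floquet eigenfunction z of the adjoint system with M⊥_z(0) ≠ 0, then x_ε(t) ≠ x₀(0) for all t ∈ [0,T] and all sufficiently small ε > 0. -/

import Mathlib

/-!
Suppose `x ε t = x₀ 0` along a sequence `ε → 0⁺`. Since `x ε (· + Δ ε)` is `Mε`-close to `x₀`,
and `x₀` passes through `x₀ 0` only at multiples of `T`, with nonzero velocity there, the crossing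
can be moved to a time `τ = Δ ε + O(ε)`; hence `u := x ε - x₀ (· - τ)` is `O(ε)` uniformly, and
`u` vanishes at `τ` and `τ + T`. Pairing with the adjoint solution `z`,
`d/dt ⟪z, u⟫ = ⟪z, f (x ε) - f (x₀ (· - τ)) - Df (x₀) u⟫ + ε ⟪z, g (·, x ε, ε)⟫`, and the first
term is `o(ε)`. Integrating over `[τ, τ + T]` shows that `∫ ⟪z, g (·, x ε, ε)⟫ → 0`, while it also
tends to `∫₀ᵀ ⟪z, g (·, x₀, 0)⟫ = ρ ∫₋ᵀ⁰ ⟪z, g (·, x₀, 0)⟫`, which is nonzero because `M⊥_z(0) ≠ 0`.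
-/

open Filter Topology Set Function Asymptotics intervalIntegral
open scoped NNReal InnerProductSpace

theorem Continuous.comp_tendstoUniformlyOn_of_isCompact {α β γ ι : Type*} [UniformSpace β]
    [UniformSpace γ] {H : β → γ} (hH : Continuous H) {K : Set β} (hK : IsCompact K)
    {l : Filter ι} {S : Set α} {F : ι → α → β} {φ : α → β} (hφ : MapsTo φ S K)
    (hF : TendstoUniformlyOn F φ l S) :
    TendstoUniformlyOn (fun i a => H (F i a)) (H ∘ φ) l S := fun _ hu =>
  (hF _ (hK.uniformContinuousAt_of_continuousAt H (fun _ _ => hH.continuousAt) hu)).mono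
    fun _ hi a ha => hi a ha (hφ ha)

theorem tendstoUniformly_of_dist_le {α β ι : Type*} [PseudoMetricSpace β] {F : ι → α → β}
    {φ : α → β} {l : Filter ι} {b : ι → ℝ} (hb : Tendsto b l (𝓝 0))
    (h : ∀ᶠ i in l, ∀ a, dist (φ a) (F i a) ≤ b i) : TendstoUniformly F φ l :=
  Metric.tendstoUniformly_iff.2 fun _ hη =>
    (h.and (hb.eventually (gt_mem_nhds hη))).mono fun _ hi a => (hi.1 a).trans_lt hi.2

theorem TendstoUniformly.of_dist_le {α β ι : Type*} [PseudoMetricSpace β] {F G : ι → α → β}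
    {φ : α → β} {l : Filter ι} (hF : TendstoUniformly F φ l) {b : ι → ℝ}
    (hb : Tendsto b l (𝓝 0)) (h : ∀ᶠ i in l, ∀ a, dist (F i a) (G i a) ≤ b i) :
    TendstoUniformly G φ l :=
  Metric.tendstoUniformly_iff.2 fun η hη =>
    ((Metric.tendstoUniformly_iff.1 hF _ (half_pos hη)).and
      (h.and (hb.eventually (gt_mem_nhds (half_pos hη))))).mono fun _ hi a =>
      (dist_triangle _ _ _).trans_lt (by linarith [hi.1 a, hi.2.1 a, hi.2.2])

theorem LipschitzWith.tendstoUniformly_comp_sub {E ι : Type*} [PseudoMetricSpace E]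
    {γ : ℝ → E} {L : ℝ≥0} (hL : LipschitzWith L γ) {l : Filter ι} {τ : ι → ℝ}
    (hτ : Tendsto τ l (𝓝 0)) : TendstoUniformly (fun i s => γ (s - τ i)) γ l :=
  tendstoUniformly_of_dist_le (by simpa using hτ.abs.const_mul (L : ℝ))
    (Eventually.of_forall fun i s => by simpa [Real.dist_eq] using hL.dist_le_mul s (s - τ i))

theorem IsCompact.tendsto_nhds_of_tendsto_comp {X Y ι : Type*} [TopologicalSpace X]
    [TopologicalSpace Y] [T2Space Y] {K : Set X} (hK : IsCompact K) {γ : X → Y}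
    (hγ : Continuous γ) {a : X} (ha : ∀ s ∈ K, γ s = γ a → s = a) {l : Filter ι}
    {σ : ι → X} (hσK : ∀ᶠ i in l, σ i ∈ K) (hσ : Tendsto (γ ∘ σ) l (𝓝 (γ a))) :
    Tendsto σ l (𝓝 a) :=
  hK.tendsto_nhds_of_unique_mapClusterPt hσK fun c hc hcl =>
    ha c hc (eq_of_nhds_neBot (ClusterPt.mono (hcl.continuousAt_comp hγ.continuousAt) hσ).neBot)

theorem HasDerivAt.isBigO_sub_rev {E : Type*} [NormedAddCommGroup E] [NormedSpace ℝ E]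
    {γ : ℝ → E} {v : E} {a : ℝ} (h : HasDerivAt γ v a) (hv : v ≠ 0) :
    (fun s => s - a) =O[𝓝 a] (fun s => γ s - γ a) :=
  (HasDerivAtFilter.isTheta_sub h hv).isBigO_symm.comp_tendsto
    (tendsto_id.prodMk tendsto_const_pure)

theorem ContDiff.eventually_norm_sub_sub_fderiv_le {E F ι α : Type*} [NormedAddCommGroup E]
    [NormedSpace ℝ E] [NormedAddCommGroup F] [NormedSpace ℝ F] {f : E → F}
    (hf : ContDiff ℝ 1 f) {K : Set E} (hK : IsCompact K) {γ : α → E} (hγ : ∀ a, γ a ∈ K)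
    {l : Filter ι} {p q : ι → α → E} (hp : TendstoUniformly p γ l)
    (hq : TendstoUniformly q γ l) {η : ℝ} (hη : 0 < η) :
    ∀ᶠ i in l, ∀ a,
      ‖f (p i a) - f (q i a) - fderiv ℝ f (γ a) (p i a - q i a)‖ ≤ η * ‖p i a - q i a‖ := by
  obtain ⟨δ, hδ, hfδ⟩ := Metric.mem_uniformity_dist.1
    (hK.uniformContinuousAt_of_continuousAt _
      (fun _ _ => (hf.continuous_fderiv one_ne_zero).continuousAt) (Metric.dist_mem_uniformity hη))
  filter_upwards [Metric.tendstoUniformly_iff.1 hp δ hδ, Metric.tendstoUniformly_iff.1 hq δ hδ]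
    with i hpi hqi a
  have hderiv : ∀ y ∈ Metric.ball (γ a) δ,
      HasFDerivWithinAt f (fderiv ℝ f y) (Metric.ball (γ a) δ) y := fun y _ =>
    ((hf.differentiable one_ne_zero) y).hasFDerivAt.hasFDerivWithinAt
  have hbound : ∀ y ∈ Metric.ball (γ a) δ, ‖fderiv ℝ f y - fderiv ℝ f (γ a)‖ ≤ η := fun y hy => by
    rw [← dist_eq_norm, dist_comm]
    exact (hfδ (Metric.mem_ball'.1 hy) (hγ a)).le
  exact (convex_ball _ _).norm_image_sub_le_of_norm_hasFDerivWithin_le' hderiv hbound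
    (Metric.mem_ball'.2 (hqi a)) (Metric.mem_ball'.2 (hpi a))

theorem Function.Periodic.forall_of_forall_mem_Icc {α : Type*} {F : ℝ → α} {T : ℝ}
    (hF : Periodic F T) (hT : 0 < T) {P : α → Prop} (h : ∀ t ∈ Icc 0 T, P (F t)) (t : ℝ) :
    P (F t) := by
  obtain ⟨s, hs, hst⟩ := hF.exists_mem_Ico₀ hT t
  exact hst ▸ h s (Ico_subset_Icc_self hs)

theorem Function.Periodic.exists_lipschitzWith_of_hasDerivAt {E : Type*} [NormedAddCommGroup E]
    [NormedSpace ℝ E] {γ γ' : ℝ → E} (hγ : ∀ t, HasDerivAt γ (γ' t) t) (hγ' : Continuous γ')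
    {T : ℝ} (hT : T ≠ 0) (hper : Periodic γ' T) : ∃ L, LipschitzWith L γ := by
  obtain ⟨C, hC⟩ := (hper.isBounded_of_continuous hT hγ').exists_norm_le
  refine ⟨C.toNNReal, lipschitzWith_of_nnnorm_deriv_le (fun t => (hγ t).differentiableAt)
    fun t => ?_⟩
  rw [(hγ t).deriv, ← NNReal.coe_le_coe, coe_nnnorm]
  exact (hC _ (mem_range_self t)).trans (Real.le_coe_toNNReal C)

theorem Function.Periodic.of_hasDerivAt_of_apply_eq {E : Type*} [NormedAddCommGroup E]
    [NormedSpace ℝ E] {f : E → E} {K : ℝ≥0} {U : Set E} (hf : LipschitzOnWith K f U)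
    {γ : ℝ → E} (hγ : ∀ t, HasDerivAt γ (f (γ t)) t) (hγU : ∀ t, γ t ∈ U) {s : ℝ}
    (hs : γ s = γ 0) : Periodic γ s := by
  have h := ODE_solution_unique_univ (v := fun _ => f) (s := fun _ => U) (t₀ := 0)
    (fun _ => hf) (f := fun t => γ (t + s)) (g := γ)
    (fun t => ⟨HasDerivAt.comp_add_const t s (hγ (t + s)), hγU _⟩) (fun t => ⟨hγ t, hγU t⟩)
    (by simpa using hs)
  exact fun t => congrFun h t

theorem eq_zero_of_apply_eq_apply_zero {E : Type*} [NormedAddCommGroup E]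
    [NormedSpace ℝ E] {f : E → E} (hf : ContDiff ℝ 1 f) {γ : ℝ → E}
    (hγ : ∀ t, HasDerivAt γ (f (γ t)) t) {T : ℝ} (hT : 0 < T) (hper : Periodic γ T)
    (hleast : ∀ s ∈ Ioo 0 T, ¬ Periodic γ s) {s : ℝ} (hs : s ∈ Ioo (-T) T)
    (h : γ s = γ 0) : s = 0 := by
  have hcont : Continuous γ := continuous_iff_continuousAt.2 fun t => (hγ t).continuousAt
  obtain ⟨K, hK⟩ := hf.locallyLipschitz.locallyLipschitzOn.exists_lipschitzOnWith_of_compact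
    (hper.compact_of_continuous hT.ne' hcont)
  have hret : ∀ r, γ r = γ 0 → Periodic γ r := fun r =>
    Periodic.of_hasDerivAt_of_apply_eq hK hγ (mem_range_self ·)
  rcases lt_trichotomy s 0 with hneg | hzero | hpos
  · refine (hleast (s + T) ⟨by linarith [hs.1], by linarith⟩ (hret _ ?_)).elim
    rw [hper s, h]
  · exact hzero
  · exact (hleast s ⟨hpos, hs.2⟩ (hret s h)).elim

theorem hasDerivAt_inner_adjoint {E : Type*} [NormedAddCommGroup E] [InnerProductSpace ℝ E]
    [CompleteSpace E] {z u : ℝ → E} {A : E →L[ℝ] E} {u' : E} {t : ℝ}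
    (hz : HasDerivAt z (-(ContinuousLinearMap.adjoint A) (z t)) t) (hu : HasDerivAt u u' t) :
    HasDerivAt (fun s => ⟪z s, u s⟫_ℝ) ⟪z t, u' - A (u t)⟫_ℝ t := by
  refine (hz.inner ℝ hu).congr_deriv ?_
  rw [inner_neg_left, ContinuousLinearMap.adjoint_inner_left, inner_sub_right]
  ring

theorem mul_integral_neg_period_eq {F : ℝ → ℝ} {T ρ : ℝ} (hF : ∀ s, F (s + T) = ρ * F s) :
    ρ * ∫ s in -T..0, F s = ∫ s in 0..T, F s := by
  rw [← integral_const_mul]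
  simp_rw [← hF]
  simp [integral_comp_add_right]

theorem exists_forall_norm_sub_le_of_isBigO {E : Type*} [SeminormedAddCommGroup E]
    {x₀ : ℝ → E} {L : ℝ≥0} (hL : LipschitzWith L x₀) {ι : Type*} {l : Filter ι}
    {ε Δ τ : ι → ℝ} {y : ι → ℝ → E} {M : ℝ}
    (hyM : ∀ i s, ‖y i s - x₀ (s - Δ i)‖ ≤ M * ε i) (hσ : (fun i => τ i - Δ i) =O[l] ε)
    (hε : ∀ᶠ i in l, 0 ≤ ε i) :
    ∃ C, ∀ᶠ i in l, ∀ s, ‖y i s - x₀ (s - τ i)‖ ≤ C * ε i := by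
  obtain ⟨c, hc⟩ := hσ.bound
  refine ⟨M + L * c, ?_⟩
  filter_upwards [hc, hε] with i hci hεi s
  have hshift : ‖x₀ (s - Δ i) - x₀ (s - τ i)‖ ≤ L * (c * ε i) := by
    calc ‖x₀ (s - Δ i) - x₀ (s - τ i)‖ ≤ L * |τ i - Δ i| := by
          rw [← dist_eq_norm, ← sub_sub_sub_cancel_left (Δ i) (τ i) s, ← Real.dist_eq]
          exact hL.dist_le_mul _ _
      _ ≤ L * (c * ε i) := by
          gcongr
          simpa [Real.norm_eq_abs, abs_of_nonneg hεi] using hci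
  calc ‖y i s - x₀ (s - τ i)‖ ≤ ‖y i s - x₀ (s - Δ i)‖ + ‖x₀ (s - Δ i) - x₀ (s - τ i)‖ :=
        norm_sub_le_norm_sub_add_norm_sub _ _ _
    _ ≤ (M + L * c) * ε i := by linarith [hyM i s]

theorem isBigO_of_isBigO_apply_sub_apply_zero {E : Type*} [NormedAddCommGroup E]
    [NormedSpace ℝ E] {f : E → E} (hf : ContDiff ℝ 1 f) {x₀ : ℝ → E}
    (hx₀ : ∀ t, HasDerivAt x₀ (f (x₀ t)) t) {T : ℝ} (hT : 0 < T) (hper : Periodic x₀ T)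
    (hleast : ∀ s ∈ Ioo 0 T, ¬ Periodic x₀ s) (hf₀ : f (x₀ 0) ≠ 0) {K : Set ℝ}
    (hK : IsCompact K) (hKT : K ⊆ Ioo (-T) T) {ι : Type*} {l : Filter ι} {σ e : ι → ℝ}
    (he : Tendsto e l (𝓝 0)) (hσK : ∀ᶠ i in l, σ i ∈ K)
    (hσ : (fun i => x₀ (σ i) - x₀ 0) =O[l] e) : σ =O[l] e := by
  have hσ0 : Tendsto σ l (𝓝 0) :=
    hK.tendsto_nhds_of_tendsto_comp (continuous_iff_continuousAt.2 fun t => (hx₀ t).continuousAt)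
      (fun s hs => eq_zero_of_apply_eq_apply_zero hf hx₀ hT hper hleast (hKT hs)) hσK
      (tendsto_sub_nhds_zero_iff.1 (hσ.trans_tendsto he))
  simpa [Function.comp_def] using (((hx₀ 0).isBigO_sub_rev hf₀).comp_tendsto hσ0).trans hσ

theorem exists_phase_of_crossing {E : Type*} [NormedAddCommGroup E] [NormedSpace ℝ E]
    {f : E → E} (hf : ContDiff ℝ 1 f) {x₀ : ℝ → E} (hx₀ : ∀ t, HasDerivAt x₀ (f (x₀ t)) t)
    {T : ℝ} (hT : 0 < T) (hper : Periodic x₀ T) (hleast : ∀ s ∈ Ioo 0 T, ¬ Periodic x₀ s)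
    (hf₀ : f (x₀ 0) ≠ 0) {ι : Type*} {l : Filter ι} {ε Δ t : ι → ℝ} {y : ι → ℝ → E} {M : ℝ}
    (hε : Tendsto ε l (𝓝[>] 0)) (hΔ : Tendsto Δ l (𝓝 0)) (hyper : ∀ i, Periodic (y i) T)
    (hyt : ∀ i, y i (t i) = x₀ 0) (hyM : ∀ i, ∀ s ∈ Icc 0 T, ‖y i (s + Δ i) - x₀ s‖ ≤ M * ε i) :
    ∃ τ : ι → ℝ, Tendsto τ l (𝓝 0) ∧ (∀ i, y i (τ i) = x₀ 0) ∧
      ∃ C, ∀ᶠ i in l, ∀ s, ‖y i s - x₀ (s - τ i)‖ ≤ C * ε i := by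
  -- a crossing time in `[-T/2, T/2)` keeps `τ - Δ` inside a compact subset of `(-T, T)`
  choose τ hτ hyτ using fun i => (hyper i).exists_mem_Ico hT (t i) (-(T / 2))
  have hyM' : ∀ i s, ‖y i s - x₀ (s - Δ i)‖ ≤ M * ε i := fun i s => by
    simpa using (((hyper i).add_const (Δ i)).sub hper).forall_of_forall_mem_Icc hT
      (P := (‖·‖ ≤ M * ε i)) (hyM i) (s - Δ i)
  have hσx : ∀ i, ‖x₀ (τ i - Δ i) - x₀ 0‖ ≤ M * ε i := fun i => by
    rw [norm_sub_rev, ← hyt i, hyτ i]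
    exact hyM' i (τ i)
  have hσK : ∀ᶠ i in l, τ i - Δ i ∈ Icc (-(3 * T / 4)) (3 * T / 4) := by
    filter_upwards [hΔ.eventually (Metric.closedBall_mem_nhds 0 (by positivity : 0 < T / 4))]
      with i hi
    rw [Real.dist_0_eq_abs, abs_le] at hi
    constructor <;> linarith [(hτ i).1, (hτ i).2]
  have hε0 : Tendsto ε l (𝓝 0) := hε.mono_right nhdsWithin_le_nhds
  have hεpos : ∀ᶠ i in l, 0 < ε i := hε.eventually self_mem_nhdsWithin
  have hσ : (fun i => τ i - Δ i) =O[l] ε :=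
    isBigO_of_isBigO_apply_sub_apply_zero hf hx₀ hT hper hleast hf₀ isCompact_Icc
      (fun s hs => ⟨by linarith [hs.1], by linarith [hs.2]⟩) hε0 hσK
      (IsBigO.of_bound M (hεpos.mono fun i hi => by
        rw [Real.norm_of_nonneg hi.le]; exact hσx i))
  obtain ⟨L, hL⟩ := Periodic.exists_lipschitzWith_of_hasDerivAt hx₀
    (hf.continuous.comp (continuous_iff_continuousAt.2 fun t => (hx₀ t).continuousAt))
    hT.ne' (hper.comp f)
  refine ⟨τ, ?_, fun i => (hyτ i).symm.trans (hyt i),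
    exists_forall_norm_sub_le_of_isBigO hL hyM' hσ (hεpos.mono fun _ hi => hi.le)⟩
  simpa using (hσ.trans_tendsto hε0).add hΔ

theorem integral_inner_remainder_add_eq_zero {E : Type*} [NormedAddCommGroup E]
    [InnerProductSpace ℝ E] [CompleteSpace E] {f : E → E} (hf : ContDiff ℝ 1 f)
    {g : ℝ → E → ℝ → E} (hg : Continuous fun p : ℝ × E × ℝ => g p.1 p.2.1 p.2.2)
    {x₀ z : ℝ → E} (hx₀ : ∀ t, HasDerivAt x₀ (f (x₀ t)) t) {T : ℝ} (hper : Periodic x₀ T)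
    (hz : ∀ t, HasDerivAt z (-(ContinuousLinearMap.adjoint (fderiv ℝ f (x₀ t))) (z t)) t)
    {e τ : ℝ} {y : ℝ → E} (hy : ∀ t, HasDerivAt y (f (y t) + e • g t (y t) e) t)
    (hyτ : y τ = x₀ 0) (hyT : y (τ + T) = y τ) :
    (∫ s in τ..τ + T, ⟪z s, f (y s) - f (x₀ (s - τ)) - fderiv ℝ f (x₀ s) (y s - x₀ (s - τ))⟫_ℝ)
      + e * ∫ s in τ..τ + T, ⟪z s, g s (y s) e⟫_ℝ = 0 := by
  have hcx₀ : Continuous x₀ := continuous_iff_continuousAt.2 fun t => (hx₀ t).continuousAt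
  have hcy : Continuous y := continuous_iff_continuousAt.2 fun t => (hy t).continuousAt
  have hcz : Continuous z := continuous_iff_continuousAt.2 fun t => (hz t).continuousAt
  have hcf := hf.continuous
  have hcdf := (hf.continuous_fderiv one_ne_zero).comp hcx₀
  have hcg : Continuous fun s => g s (y s) e :=
    hg.comp (continuous_id.prodMk (hcy.prodMk continuous_const))
  have hu : ∀ t, HasDerivAt (fun s => y s - x₀ (s - τ))
      (f (y t) + e • g t (y t) e - f (x₀ (t - τ))) t := fun t =>
    (hy t).sub (HasDerivAt.comp_sub_const t τ (hx₀ (t - τ)))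
  have hint := integral_eq_sub_of_hasDerivAt
    (fun t _ => hasDerivAt_inner_adjoint (hz t) (hu t)) (a := τ) (b := τ + T)
    (Continuous.intervalIntegrable (by fun_prop) _ _)
  have hend : y (τ + T) - x₀ (τ + T - τ) = 0 := by
    rw [hyT, hyτ, add_sub_cancel_left, hper.eq, sub_self]
  simp only [hend, hyτ, sub_self, inner_zero_right] at hint
  rw [← integral_const_mul, ← integral_add (Continuous.intervalIntegrable (by fun_prop) _ _)
    (Continuous.intervalIntegrable (by fun_prop) _ _), ← hint]
  congr 1 with s
  rw [← real_inner_smul_right, ← inner_add_right]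
  congr 1
  abel

theorem isLittleO_integral_inner_remainder {E : Type*} [NormedAddCommGroup E]
    [InnerProductSpace ℝ E] {f : E → E} (hf : ContDiff ℝ 1 f) {x₀ z : ℝ → E}
    (hx₀ : ∀ t, HasDerivAt x₀ (f (x₀ t)) t) {T : ℝ} (hT : 0 < T) (hper : Periodic x₀ T)
    (hcz : Continuous z) {ι : Type*} {l : Filter ι} {ε τ : ι → ℝ} {y : ι → ℝ → E}
    (hε : Tendsto ε l (𝓝 0)) (hτ : Tendsto τ l (𝓝 0)) {C : ℝ}
    (hu : ∀ᶠ i in l, ∀ s, ‖y i s - x₀ (s - τ i)‖ ≤ C * ε i) :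
    (fun i => ∫ s in τ i..τ i + T,
      ⟪z s, f (y i s) - f (x₀ (s - τ i)) - fderiv ℝ f (x₀ s) (y i s - x₀ (s - τ i))⟫_ℝ)
      =o[l] ε := by
  have hcx₀ : Continuous x₀ := continuous_iff_continuousAt.2 fun t => (hx₀ t).continuousAt
  obtain ⟨L, hL⟩ := Periodic.exists_lipschitzWith_of_hasDerivAt hx₀ (hf.continuous.comp hcx₀)
    hT.ne' (hper.comp f)
  have hshift := hL.tendstoUniformly_comp_sub hτ
  have hy : TendstoUniformly y x₀ l :=
    hshift.of_dist_le (by simpa using hε.const_mul C) (hu.mono fun i hi s => by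
      rw [dist_comm, dist_eq_norm]
      exact hi s)
  obtain ⟨Z, hZ, hzZ⟩ :=
    (isCompact_Icc (a := -T) (b := 2 * T)).image_of_continuousOn hcz.continuousOn
      |>.isBounded.exists_pos_norm_le
  refine isLittleO_iff.2 fun c hc => ?_
  set η := c / (Z * (|C| + 1) * T)
  filter_upwards [hf.eventually_norm_sub_sub_fderiv_le (hper.compact_of_continuous hT.ne' hcx₀)
      mem_range_self hy hshift (by positivity : 0 < η), hu,
      hτ.eventually (Metric.closedBall_mem_nhds 0 hT)] with i hN hui hτi
  rw [Real.dist_0_eq_abs, abs_le] at hτi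
  have hpt : ∀ s ∈ uIoc (τ i) (τ i + T), ‖⟪z s, f (y i s) - f (x₀ (s - τ i))
      - fderiv ℝ f (x₀ s) (y i s - x₀ (s - τ i))⟫_ℝ‖ ≤ Z * (η * (|C| * ‖ε i‖)) := by
    intro s hs
    rw [uIoc_of_le (by linarith)] at hs
    refine (norm_inner_le_norm _ _).trans (mul_le_mul
      (hzZ _ (mem_image_of_mem _ ⟨by linarith [hs.1], by linarith [hs.2]⟩))
      ((hN s).trans (mul_le_mul_of_nonneg_left ?_ (by positivity))) (norm_nonneg _) hZ.le)
    calc ‖y i s - x₀ (s - τ i)‖ ≤ C * ε i := hui s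
      _ ≤ |C| * ‖ε i‖ := by rw [Real.norm_eq_abs, ← abs_mul]; exact le_abs_self _
  calc _ ≤ Z * (η * (|C| * ‖ε i‖)) * |τ i + T - τ i| := norm_integral_le_of_norm_le_const hpt
    _ ≤ Z * (η * ((|C| + 1) * ‖ε i‖)) * T := by
        rw [add_sub_cancel_left, abs_of_pos hT]; gcongr; linarith
    _ = c * ‖ε i‖ := by simp only [η]; field_simp

theorem tendsto_integral_inner_perturbation {E : Type*} [NormedAddCommGroup E]
    [InnerProductSpace ℝ E] {g : ℝ → E → ℝ → E}
    (hg : Continuous fun p : ℝ × E × ℝ => g p.1 p.2.1 p.2.2) {x₀ z : ℝ → E}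
    (hcx₀ : Continuous x₀) (hcz : Continuous z) (T : ℝ) {ι : Type*} {l : Filter ι}
    [l.IsCountablyGenerated] {ε τ : ι → ℝ} {y : ι → ℝ → E} (hcy : ∀ i, Continuous (y i))
    (hε : Tendsto ε l (𝓝 0)) (hτ : Tendsto τ l (𝓝 0)) {C : ℝ}
    (hu : ∀ᶠ i in l, ∀ s, ‖y i s - x₀ (s - τ i)‖ ≤ C * ε i) :
    Tendsto (fun i => ∫ s in τ i..τ i + T, ⟪z s, g s (y i s) (ε i)⟫_ℝ) l
      (𝓝 (∫ s in 0..T, ⟪z s, g s (x₀ s) 0⟫_ℝ)) := by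
  set H : ℝ × E × ℝ → ℝ := fun p => ⟪z p.1, g p.1 p.2.1 p.2.2⟫_ℝ
  have hH : Continuous H := (hcz.comp continuous_fst).inner hg
  have hΦ : TendstoUniformly (fun i s => (s + τ i, y i (s + τ i), ε i))
      (fun s => (s, x₀ s, (0 : ℝ))) l := by
    refine tendstoUniformly_of_dist_le (b := fun i => |τ i| + C * ε i + |ε i|)
      (by simpa using (hτ.abs.add (hε.const_mul C)).add hε.abs) (hu.mono fun i hi s => ?_)
    have hy : dist (x₀ s) (y i (s + τ i)) ≤ C * ε i := by
      simpa [dist_comm (x₀ s), dist_eq_norm] using hi (s + τ i)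
    have hCε : 0 ≤ C * ε i := dist_nonneg.trans hy
    simp only [Prod.dist_eq, Real.dist_eq, sub_add_cancel_left, abs_neg, zero_sub]
    refine max_le ?_ (max_le ?_ ?_) <;> linarith [abs_nonneg (τ i), abs_nonneg (ε i)]
  have hφ : Continuous fun s => (s, x₀ s, (0 : ℝ)) := by fun_prop
  have hlim := (hH.comp_tendstoUniformlyOn_of_isCompact (isCompact_uIcc.image hφ)
    (mapsTo_image _ _) (hΦ.tendstoUniformlyOn (s := uIcc 0 T)))
    |>.tendsto_intervalIntegral_of_continuousOn (μ := MeasureTheory.volume)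
      (Eventually.of_forall fun i => Continuous.continuousOn (by
        have := hcy i
        fun_prop))
  refine hlim.congr fun i => ?_
  rw [integral_comp_add_right (fun s => H (s, y i s, ε i)), zero_add, add_comm]

theorem integral_inner_eq_zero_of_crossings {E : Type*} [NormedAddCommGroup E]
    [InnerProductSpace ℝ E] [CompleteSpace E] {f : E → E} (hf : ContDiff ℝ 1 f)
    {g : ℝ → E → ℝ → E} (hg : Continuous fun p : ℝ × E × ℝ => g p.1 p.2.1 p.2.2) {T : ℝ}
    (hT : 0 < T) {x₀ z : ℝ → E} (hx₀ : ∀ t, HasDerivAt x₀ (f (x₀ t)) t) (hper : Periodic x₀ T)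
    (hz : ∀ t, HasDerivAt z (-(ContinuousLinearMap.adjoint (fderiv ℝ f (x₀ t))) (z t)) t)
    {ι : Type*} {l : Filter ι} [l.NeBot] [l.IsCountablyGenerated] {ε τ : ι → ℝ}
    {y : ι → ℝ → E} (hε : Tendsto ε l (𝓝[>] 0)) (hτ : Tendsto τ l (𝓝 0))
    (hy : ∀ i t, HasDerivAt (y i) (f (y i t) + ε i • g t (y i t) (ε i)) t)
    (hyper : ∀ i, Periodic (y i) T) (hyτ : ∀ i, y i (τ i) = x₀ 0) {C : ℝ}
    (hu : ∀ᶠ i in l, ∀ s, ‖y i s - x₀ (s - τ i)‖ ≤ C * ε i) :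
    ∫ s in 0..T, ⟪z s, g s (x₀ s) 0⟫_ℝ = 0 := by
  have hε0 : Tendsto ε l (𝓝 0) := hε.mono_right nhdsWithin_le_nhds
  have hcz : Continuous z := continuous_iff_continuousAt.2 fun t => (hz t).continuousAt
  have hcx₀ : Continuous x₀ := continuous_iff_continuousAt.2 fun t => (hx₀ t).continuousAt
  refine tendsto_nhds_unique (tendsto_integral_inner_perturbation hg hcx₀ hcz T
    (fun i => continuous_iff_continuousAt.2 fun t => (hy i t).continuousAt) hε0 hτ hu) ?_
  have hR := (isLittleO_integral_inner_remainder hf hx₀ hT hper hcz hε0 hτ hu)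
    |>.tendsto_div_nhds_zero.neg
  rw [neg_zero] at hR
  refine hR.congr' ((hε.eventually self_mem_nhdsWithin).mono fun i hi => ?_)
  have h := integral_inner_remainder_add_eq_zero hf hg hx₀ hper hz (hy i) (hyτ i) (hyper i _)
  field_simp [hi.ne']
  linarith

theorem avoidance_of_base_point_general
    (n : ℕ) (f : EuclideanSpace ℝ (Fin n) → EuclideanSpace ℝ (Fin n))
    (g : ℝ → EuclideanSpace ℝ (Fin n) → ℝ → EuclideanSpace ℝ (Fin n))
    (hf : ContDiff ℝ 1 f)
    (hg : Continuous fun p : ℝ × EuclideanSpace ℝ (Fin n) × ℝ => g p.1 p.2.1 p.2.2)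
    (T : ℝ) (hT : 0 < T)
    (hgper : ∀ t x ε, g (t + T) x ε = g t x ε)
    -- x₀ is a nondegenerate T-periodic limit cycle of ẋ = f(x)
    (x₀ : ℝ → EuclideanSpace ℝ (Fin n))
    (hx₀ : ∀ t, HasDerivAt x₀ (f (x₀ t)) t)
    (hx₀per : Function.Periodic x₀ T)
    -- x_ε are T-periodic solutions of the perturbed system with ‖x_ε(·+Δ_ε) − x₀‖ ≤ Mε
    (x : ℝ → ℝ → EuclideanSpace ℝ (Fin n)) (Δ : ℝ → ℝ)
    (M ε₀ : ℝ) (hε₀ : 0 < ε₀)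
    (hx : ∀ ε ∈ Set.Ioc 0 ε₀, ∀ t,
      HasDerivAt (x ε) (f (x ε t) + ε • g t (x ε t) ε) t)
    (hxper : ∀ ε ∈ Set.Ioc 0 ε₀, Function.Periodic (x ε) T)
    (hΔ : Filter.Tendsto Δ (nhdsWithin 0 (Set.Ioi 0)) (nhds 0))
    (hbound : ∀ ε ∈ Set.Ioc 0 ε₀, ∀ t ∈ Set.Icc (0:ℝ) T,
      ‖x ε (t + Δ ε) - x₀ t‖ ≤ M * ε)
    -- T is the least period of x₀
    (hleast : ∀ s ∈ Set.Ioo (0:ℝ) T, ¬ Function.Periodic x₀ s)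
    -- the flow and the transversal surface S of Corollary 2.2
    (A : EuclideanSpace ℝ (Fin (n - 1)) →L[ℝ] EuclideanSpace ℝ (Fin n))
    (hA : ∀ (c : ℝ) (w : EuclideanSpace ℝ (Fin (n - 1))),
      c • f (x₀ 0) + A w = 0 → c = 0 ∧ w = 0)
    -- z is a not T-periodic Floquet eigenfunction of the adjoint system, multiplier ρ ≠ 1
    (z : ℝ → EuclideanSpace ℝ (Fin n)) (ρ : ℝ)
    (hz : ∀ t, HasDerivAt z (-(ContinuousLinearMap.adjoint (fderiv ℝ f (x₀ t))) (z t)) t)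
    (hzF : ∀ t, z (t + T) = ρ • z t)
    (hMz0 : ((ρ / (ρ - 1)) * ∫ s in (-T)..(0:ℝ), (inner ℝ (z s) (g s (x₀ s) 0) : ℝ)) ≠ 0) :
    ∃ ε₁ > 0, ∀ ε ∈ Set.Ioc 0 (min ε₁ ε₀), ∀ t ∈ Set.Icc (0:ℝ) T, x ε t ≠ x₀ 0 := by
  have hJ : ∫ s in 0..T, ⟪z s, g s (x₀ s) 0⟫_ℝ ≠ 0 := by
    rw [← mul_integral_neg_period_eq fun s => by rw [hzF, hx₀per, hgper, real_inner_smul_left]]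
    exact mul_ne_zero (by rintro rfl; simp at hMz0) (right_ne_zero_of_mul hMz0)
  have hf₀ : f (x₀ 0) ≠ 0 := fun h => one_ne_zero (hA 1 0 (by simp [h])).1
  suffices h : ∀ᶠ ε in 𝓝[>] 0, ∀ t ∈ Icc 0 T, x ε t ≠ x₀ 0 by
    obtain ⟨ε₁, hε₁, hsub⟩ := mem_nhdsGT_iff_exists_Ioc_subset.1 h
    exact ⟨ε₁, hε₁, fun ε hε => hsub ⟨hε.1, hε.2.trans (min_le_left _ _)⟩⟩
  by_contra hcon
  obtain ⟨ε, hε, hεmem⟩ := frequently_iff_seq_forall.1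
    ((not_eventually.1 hcon).and_eventually (Ioc_mem_nhdsGT hε₀))
  push Not at hεmem
  choose t hxt using fun k => (hεmem k).1.imp fun _ => And.right
  obtain ⟨τ, hτ, hxτ, C, hu⟩ := exists_phase_of_crossing hf hx₀ hT hx₀per hleast hf₀ hε
    (hΔ.comp hε) (fun k => hxper _ (hεmem k).2) hxt (fun k => hbound _ (hεmem k).2)
  exact hJ (integral_inner_eq_zero_of_crossings hf hg hT hx₀ hx₀per hz hε hτ
    (fun k => hx _ (hεmem k).2) (fun k => hxper _ (hεmem k).2) hxτ hu)

/-- Corollary 3.5, avoidance of the base point: with `T` the least period of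
the nondegenerate cycle `x₀`, `x_ε → x₀` uniformly, and `Δ_ε` from the transversal-surface
construction, if some not-`T`-periodic eigenfunction `z` has `M⊥_z(0) ≠ 0` then
`x_ε(t) ≠ x₀(0)` for all `t ∈ [0,T]` and all sufficiently small `ε > 0`. -/
theorem avoidance_of_base_point
    (n : ℕ) (f : EuclideanSpace ℝ (Fin n) → EuclideanSpace ℝ (Fin n))
    (g : ℝ → EuclideanSpace ℝ (Fin n) → ℝ → EuclideanSpace ℝ (Fin n))
    (hf : ContDiff ℝ 1 f)
    (hg : Continuous fun p : ℝ × EuclideanSpace ℝ (Fin n) × ℝ => g p.1 p.2.1 p.2.2)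
    (T : ℝ) (hT : 0 < T)
    (hgper : ∀ t x ε, g (t + T) x ε = g t x ε)
    -- x₀ is a nondegenerate T-periodic limit cycle of ẋ = f(x)
    (x₀ : ℝ → EuclideanSpace ℝ (Fin n))
    (hx₀ : ∀ t, HasDerivAt x₀ (f (x₀ t)) t)
    (hx₀per : Function.Periodic x₀ T)
    (Y : ℝ → (EuclideanSpace ℝ (Fin n) →L[ℝ] EuclideanSpace ℝ (Fin n)))
    (hY0 : Y 0 = ContinuousLinearMap.id ℝ _)
    (hY : ∀ t, HasDerivAt Y ((fderiv ℝ f (x₀ t)).comp (Y t)) t)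
    (hnondeg : Module.finrank ℝ
      ↥(⨆ k : ℕ, LinearMap.ker
        (((Y T : Module.End ℝ (EuclideanSpace ℝ (Fin n))) - 1) ^ k)) = 1)
    -- x_ε are T-periodic solutions of the perturbed system with ‖x_ε(·+Δ_ε) − x₀‖ ≤ Mε
    (x : ℝ → ℝ → EuclideanSpace ℝ (Fin n)) (Δ : ℝ → ℝ)
    (M ε₀ : ℝ) (hM : 0 < M) (hε₀ : 0 < ε₀)
    (hx : ∀ ε ∈ Set.Ioc 0 ε₀, ∀ t,
      HasDerivAt (x ε) (f (x ε t) + ε • g t (x ε t) ε) t)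
    (hxper : ∀ ε ∈ Set.Ioc 0 ε₀, Function.Periodic (x ε) T)
    (hΔ : Filter.Tendsto Δ (nhdsWithin 0 (Set.Ioi 0)) (nhds 0))
    (hbound : ∀ ε ∈ Set.Ioc 0 ε₀, ∀ t ∈ Set.Icc (0:ℝ) T,
      ‖x ε (t + Δ ε) - x₀ t‖ ≤ M * ε)
    -- T is the least period of x₀
    (hleast : ∀ s ∈ Set.Ioo (0:ℝ) T, ¬ Function.Periodic x₀ s)
    -- x_ε → x₀ uniformly as ε → 0⁺
    (hconv : TendstoUniformly (fun ε => x ε) x₀ (nhdsWithin 0 (Set.Ioi 0)))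
    -- the flow and the transversal surface S of Corollary 2.2
    (Ω : ℝ → ℝ → EuclideanSpace ℝ (Fin n) → EuclideanSpace ℝ (Fin n))
    (hΩ_init : ∀ t₀ ξ, Ω t₀ t₀ ξ = ξ)
    (hΩ_sol : ∀ t t₀ ξ, HasDerivAt (fun s => Ω s t₀ ξ) (f (Ω t t₀ ξ)) t)
    (A : EuclideanSpace ℝ (Fin (n - 1)) →L[ℝ] EuclideanSpace ℝ (Fin n))
    (hA : ∀ (c : ℝ) (w : EuclideanSpace ℝ (Fin (n - 1))),
      c • f (x₀ 0) + A w = 0 → c = 0 ∧ w = 0)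
    (S : EuclideanSpace ℝ (Fin (n - 1)) → EuclideanSpace ℝ (Fin n))
    (hS : ∀ w, S w = Ω T 0 (x₀ 0 + A w))
    -- the shifts Δ_ε are defined by intersecting x_ε with S: x_ε(Δ_ε) = S(v_ε), v_ε → 0
    (v : ℝ → EuclideanSpace ℝ (Fin (n - 1)))
    (hv : ∀ ε ∈ Set.Ioc 0 ε₀, x ε (Δ ε) = S (v ε))
    (hv0 : Filter.Tendsto v (nhdsWithin 0 (Set.Ioi 0)) (nhds 0))
    -- z is a not T-periodic Floquet eigenfunction of the adjoint system, multiplier ρ ≠ 1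
    (z : ℝ → EuclideanSpace ℝ (Fin n)) (ρ : ℝ)
    (hz : ∀ t, HasDerivAt z (-(ContinuousLinearMap.adjoint (fderiv ℝ f (x₀ t))) (z t)) t)
    (hzF : ∀ t, z (t + T) = ρ • z t)
    (hρ : ρ ≠ 1) (hz0 : z ≠ 0)
    (hMz0 : ((ρ / (ρ - 1)) * ∫ s in (-T)..(0:ℝ), (inner ℝ (z s) (g s (x₀ s) 0) : ℝ)) ≠ 0) :
    ∃ ε₁ > 0, ∀ ε ∈ Set.Ioc 0 (min ε₁ ε₀), ∀ t ∈ Set.Icc (0:ℝ) T, x ε t ≠ x₀ 0 :=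
  avoidance_of_base_point_general n f g hf hg T hT hgper x₀ hx₀ hx₀per x Δ M ε₀ hε₀ hx hxper hΔ
    hbound hleast A hA z ρ hz hzF hMz0
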